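/- arXiv:1301.0760 — 4 statements merged into one kernel-verified Lean document; each statement's English description precedes it below -/
import Mathlib

section
/- Let P be a poset with a lower semiclosed topology. If K is a nonempty compact subset of P and x ∈ K, then there exists a minimal element of K below x. -/
open Set

section

variable {P : Type*} [Preorder P] [TopologicalSpace P] [ClosedIicTopology P]

/-- The sets `K ∩ Iic z`, `z ∈ c`, are closed in `K` and directed downwards because `c` is a
chain, so compactness keeps their intersection nonempty. -/
theorem IsCompact.exists_mem_lowerBounds_of_isChain {K c : Set P} (hK : IsCompact K)
    (hcK : c ⊆ K) (hc : IsChain (· ≤ ·) c) (hne : c.Nonempty) : ∃ b ∈ K, b ∈ lowerBounds c := by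
  have : Nonempty c := hne.to_subtype
  have hdir : Directed (· ⊇ ·) fun z : c ↦ Iic (z : P) := fun a b ↦
    (hc.total a.2 b.2).elim (fun hab ↦ ⟨a, subset_rfl, Iic_subset_Iic.mpr hab⟩)
      fun hba ↦ ⟨b, Iic_subset_Iic.mpr hba, subset_rfl⟩
  by_contra! h
  have hempty : K ∩ ⋂ z : c, Iic (z : P) = ∅ :=
    eq_empty_of_forall_notMem fun b ⟨hbK, hb⟩ ↦
      h b hbK fun z hz ↦ mem_iInter.mp hb ⟨z, hz⟩
  obtain ⟨z, hz⟩ := hK.elim_directed_family_closed _ (fun _ ↦ isClosed_Iic) hempty hdir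
  exact (eq_empty_iff_forall_notMem.mp hz) z ⟨hcK z.2, le_rfl⟩

theorem IsCompact.exists_minimal_le {K : Set P} (hK : IsCompact K) {x : P} (hx : x ∈ K) :
    ∃ m ≤ x, Minimal (· ∈ K) m :=
  zorn_le_nonempty₀ (α := Pᵒᵈ) K
    (fun _ hcK hc y hy ↦ hK.exists_mem_lowerBounds_of_isChain hcK hc.symm ⟨y, hy⟩) x hx

end

theorem wallace_lemma_general {P : Type*} [PartialOrder P] [TopologicalSpace P]
    (hls : ∀ x : P, IsClosed (Set.Iic x))
    (K : Set P) (hK : IsCompact K) (x : P) (hx : x ∈ K) :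
    ∃ m ∈ K, m ≤ x ∧ ∀ b ∈ K, b ≤ m → b = m := by
  have : ClosedIicTopology P := ⟨hls⟩
  obtain ⟨m, hmx, hm⟩ := hK.exists_minimal_le hx
  exact ⟨m, hm.prop, hmx, fun b hb hbm ↦ hm.eq_of_le hb hbm⟩

/-- Wallace's lemma (strengthened): in a poset with a lower semiclosed topology,
every nonempty compact subset has, below each of its points, a minimal element. -/
theorem wallace_lemma {P : Type*} [PartialOrder P] [TopologicalSpace P]
    (hls : ∀ x : P, IsClosed (Set.Iic x))
    (K : Set P) (hne : K.Nonempty) (hK : IsCompact K) (x : P) (hx : x ∈ K) :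
    ∃ m ∈ K, m ≤ x ∧ ∀ b ∈ K, b ≤ m → b = m :=
  wallace_lemma_general hls K hK x hx
end

section
/- In a semilattice with its algebraic convexity, a subset is free (convex and every element is an extreme point of it) if and only if it is a chain; consequently the clique number (supremum of cardinalities of maximal free sets) equals the depth. -/
/-!
A chain is closed under `⊔` and is its own hull, so every subset of it is convex and no element
lies in the hull of the others. Conversely, if `x, y` are incomparable elements of a convex set `K`,
then `x ⊔ y ∈ K` is distinct from both and is generated by them, so it is not an extreme point.
Free sets being exactly chains, maximal free sets are maximal chains, and every chain extends to one.
-/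

def IsSubsemilattice {α : Type*} [SemilatticeSup α] (T : Set α) : Prop :=
  ∀ ⦃x⦄, x ∈ T → ∀ ⦃y⦄, y ∈ T → x ⊔ y ∈ T

def semilatticeHull {α : Type*} [SemilatticeSup α] (A : Set α) : Set α :=
  ⋂₀ {T | IsSubsemilattice T ∧ A ⊆ T}

/-- A subset of a semilattice is free (convex and independent). -/
def IsFree {α : Type*} [SemilatticeSup α] (K : Set α) : Prop :=
  IsSubsemilattice K ∧ ∀ x ∈ K, x ∉ semilatticeHull (K \ {x})

section Semilattice

variable {α : Type*} [SemilatticeSup α] {A K T : Set α}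

theorem subset_semilatticeHull (A : Set α) : A ⊆ semilatticeHull A :=
  fun _ hx => Set.mem_sInter.2 fun _ hT => hT.2 hx

theorem isSubsemilattice_semilatticeHull (A : Set α) : IsSubsemilattice (semilatticeHull A) :=
  fun _ hx _ hy => Set.mem_sInter.2 fun T hT => hT.1 (hx T hT) (hy T hT)

theorem IsSubsemilattice.semilatticeHull_subset (hT : IsSubsemilattice T) (hAT : A ⊆ T) :
    semilatticeHull A ⊆ T :=
  Set.sInter_subset_of_mem ⟨hT, hAT⟩

theorem IsChain.isSubsemilattice (hK : IsChain (· ≤ ·) K) : IsSubsemilattice K := by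
  intro x hx y hy
  rcases hK.total hx hy with hxy | hyx
  · rwa [sup_eq_right.2 hxy]
  · rwa [sup_eq_left.2 hyx]

theorem IsChain.isFree (hK : IsChain (· ≤ ·) K) : IsFree K := by
  refine ⟨hK.isSubsemilattice, fun x _ hx => ?_⟩
  have hHull : semilatticeHull (K \ {x}) ⊆ K \ {x} :=
    (hK.mono Set.sdiff_subset).isSubsemilattice.semilatticeHull_subset subset_rfl
  exact (hHull hx).2 rfl

theorem IsFree.isChain (hK : IsFree K) : IsChain (· ≤ ·) K := by
  intro x hx y hy _
  by_contra! hxy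
  have hx' : x ∈ K \ {x ⊔ y} := ⟨hx, fun h => hxy.2 (h ▸ le_sup_right)⟩
  have hy' : y ∈ K \ {x ⊔ y} := ⟨hy, fun h => hxy.1 (h ▸ le_sup_left)⟩
  exact hK.2 _ (hK.1 hx hy) <| isSubsemilattice_semilatticeHull _
    (subset_semilatticeHull _ hx') (subset_semilatticeHull _ hy')

theorem isFree_iff_isChain : IsFree K ↔ IsChain (· ≤ ·) K :=
  ⟨IsFree.isChain, IsChain.isFree⟩

theorem IsMaxChain.eq_of_isFree_of_subset (hK : IsMaxChain (· ≤ ·) K) (hT : IsFree T)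
    (hKT : K ⊆ T) : K = T :=
  hK.2 hT.isChain hKT

end Semilattice

/-- In a semilattice with the algebraic convexity, free subsets are exactly chains;
consequently the clique number equals the depth. -/
theorem free_iff_chain_and_clique_eq_depth {S : Type*} [SemilatticeSup S] :
    (∀ K : Set S, IsFree K ↔ IsChain (· ≤ ·) K) ∧
    ∀ c : Cardinal,
      (∀ K : Set S, IsFree K → (∀ K' : Set S, IsFree K' → K ⊆ K' → K = K') →
        Cardinal.mk K ≤ c) ↔
      (∀ C : Set S, IsChain (· ≤ ·) C → Cardinal.mk C ≤ c) := by
  refine ⟨fun K => isFree_iff_isChain, fun c => ⟨fun hClique C hC => ?_,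
    fun hDepth K hK _ => hDepth K hK.isChain⟩⟩
  obtain ⟨M, hM, hCM⟩ := hC.exists_maxChain
  calc Cardinal.mk C ≤ Cardinal.mk M := Cardinal.mk_le_mk_of_subset hCM
    _ ≤ c := hClique M hM.1.isFree fun _ => hM.eq_of_isFree_of_subset
end

section
/- A convexity space is a convex geometry if and only if for every copoint C at a point x (a convex set maximal among convex sets not containing x), the set C ∪ {x} is convex. -/
structure Convexity (X : Type*) where
  sets : Set (Set X)
  empty_mem : ∅ ∈ sets
  sInter_mem : ∀ 𝒞 : Set (Set X), 𝒞 ⊆ sets → ⋂₀ 𝒞 ∈ sets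
  directed_sUnion_mem : ∀ 𝒞 : Set (Set X), 𝒞 ⊆ sets → 𝒞.Nonempty →
    DirectedOn (· ⊆ ·) 𝒞 → ⋃₀ 𝒞 ∈ sets

def Convexity.hull {X : Type*} (c : Convexity X) (A : Set X) : Set X :=
  ⋂₀ {C | C ∈ c.sets ∧ A ⊆ C}

def Convexity.IsConvexGeometry {X : Type*} (c : Convexity X) : Prop :=
  ∀ K ∈ c.sets, ∀ x y : X, x ≠ y → x ∉ K → y ∉ K →
    y ∈ c.hull (K ∪ {x}) → x ∉ c.hull (K ∪ {y})

/-! For a copoint `C` at `x` and a point `y ∉ C ∪ {x}`, maximality of `C` forces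
`x ∈ co(C ∪ {y})`. In a convex geometry this rules out `y ∈ co(C ∪ {x})`, so
`co(C ∪ {x}) = C ∪ {x}`. Conversely, if `y ∈ co(K ∪ {x})` and `x ∈ co(K ∪ {y})`, extend `K`
by Zorn's lemma to a copoint `C` at `x`: the second membership gives `y ∉ C`, while the
convexity of `C ∪ {x} ⊇ K ∪ {x}` gives `y ∈ C ∪ {x}`. -/

namespace Convexity

variable {X : Type*} (c : Convexity X)

lemma subset_hull (A : Set X) : A ⊆ c.hull A :=
  fun _ ha _ hC => hC.2 ha

lemma hull_mem (A : Set X) : c.hull A ∈ c.sets :=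
  c.sInter_mem _ fun _ hC => hC.1

def IsCopoint (x : X) (C : Set X) : Prop :=
  Maximal (fun D => D ∈ c.sets ∧ x ∉ D) C

variable {c}

lemma hull_min {A D : Set X} (hD : D ∈ c.sets) (hAD : A ⊆ D) : c.hull A ⊆ D :=
  Set.sInter_subset_of_mem ⟨hD, hAD⟩

lemma mem_of_hull_subset {A : Set X} (h : c.hull A ⊆ A) : A ∈ c.sets :=
  (c.subset_hull A).antisymm h ▸ c.hull_mem A

lemma isCopoint_iff {x : X} {C : Set X} :
    c.IsCopoint x C ↔ C ∈ c.sets ∧ x ∉ C ∧ ∀ D ∈ c.sets, C ⊆ D → x ∉ D → C = D :=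
  ⟨fun h => ⟨h.1.1, h.1.2, fun _ hD hCD hxD => h.eq_of_subset ⟨hD, hxD⟩ hCD⟩,
    fun ⟨hC, hxC, hmax⟩ => ⟨⟨hC, hxC⟩, fun D hD hCD => (hmax D hD.1 hCD hD.2).ge⟩⟩

lemma exists_isCopoint_superset {K : Set X} {x : X} (hK : K ∈ c.sets) (hxK : x ∉ K) :
    ∃ C, K ⊆ C ∧ c.IsCopoint x C := by
  refine zorn_subset_nonempty _ (fun 𝒞 h𝒞 hchain hne => ?_) K ⟨hK, hxK⟩
  refine ⟨⋃₀ 𝒞, ⟨?_, ?_⟩, fun _ => Set.subset_sUnion_of_mem⟩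
  · exact c.directed_sUnion_mem 𝒞 (fun D hD => (h𝒞 hD).1) hne hchain.directedOn
  · rintro ⟨D, hD, hxD⟩
    exact (h𝒞 hD).2 hxD

lemma IsCopoint.mem_hull_union_singleton {x y : X} {C : Set X} (hC : c.IsCopoint x C)
    (hyC : y ∉ C) : x ∈ c.hull (C ∪ {y}) := by
  by_contra hx
  have hC_eq : C = c.hull (C ∪ {y}) :=
    hC.eq_of_subset ⟨c.hull_mem _, hx⟩ (Set.subset_union_left.trans (c.subset_hull _))
  exact hyC (hC_eq ▸ c.subset_hull _ (Set.mem_union_right _ rfl))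

lemma IsConvexGeometry.union_singleton_mem {x : X} {C : Set X} (hc : c.IsConvexGeometry)
    (hC : c.IsCopoint x C) : C ∪ {x} ∈ c.sets := by
  refine mem_of_hull_subset fun y hy => ?_
  by_contra hy'
  obtain ⟨hyx, hyC⟩ : y ≠ x ∧ y ∉ C := by simpa [not_or] using hy'
  exact hc C hC.1.1 x y (Ne.symm hyx) hC.1.2 hyC hy (hC.mem_hull_union_singleton hyC)

lemma isConvexGeometry_of_union_singleton_mem
    (h : ∀ x C, c.IsCopoint x C → C ∪ {x} ∈ c.sets) : c.IsConvexGeometry := by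
  intro K hK x y hxy hxK _ hy hx
  obtain ⟨C, hKC, hC⟩ := exists_isCopoint_superset hK hxK
  have hyC : y ∉ C := fun hyC =>
    hC.1.2 (hull_min hC.1.1 (Set.union_subset hKC (Set.singleton_subset_iff.2 hyC)) hx)
  have hy' : y ∈ C ∪ {x} := hull_min (h x C hC) (Set.union_subset_union_left _ hKC) hy
  exact hy'.elim hyC (hxy ∘ Eq.symm)

end Convexity

/-- Jamison–Edelman: a convexity space is a convex geometry iff for every copoint
`C` at a point `x`, the set `C ∪ {x}` is convex. -/
theorem convexGeometry_iff_copoint_union {X : Type*} (c : Convexity X) :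
    c.IsConvexGeometry ↔
      ∀ (x : X) (C : Set X), C ∈ c.sets → x ∉ C →
        (∀ D ∈ c.sets, C ⊆ D → x ∉ D → C = D) → C ∪ {x} ∈ c.sets := by
  constructor
  · intro hc x C hC hxC hmax
    exact hc.union_singleton_mem (Convexity.isCopoint_iff.2 ⟨hC, hxC, hmax⟩)
  · intro h
    refine Convexity.isConvexGeometry_of_union_singleton_mem fun x C hC => ?_
    obtain ⟨hCmem, hxC, hmax⟩ := Convexity.isCopoint_iff.1 hC
    exact h x C hCmem hxC hmax
end

section
/- Every join-semilattice with least element 0 that admits a basis (i.e. is a free B-module) is distributive: if x ≤ y ⊕ z then there exist y' ≤ y and z' ≤ z with x = y' ⊕ z'. -/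
/-!
Every element `x` is the join of its support, the unique finite set of basis elements below it
that represents it. By uniqueness, the support of `y ⊔ z` is the union of the supports of `y`
and `z`, and `x ≤ y` exactly when the support of `x` is contained in that of `y`. Hence a basis
element `b` (whose support is `{b}`) below `y ⊔ z` lies below `y` or below `z`: basis elements are
coprime. Splitting the support of `x` according to which of `y`, `z` each element lies below
gives the decomposition `x = y' ⊔ z'`.
-/

def IsSemilatticeBasis {S : Type*} [SemilatticeSup S] [OrderBot S] (B : Set S) : Prop :=
  ∀ x : S, ∃! F : Finset S, ↑F ⊆ B ∧ x = F.sup id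

theorem Finset.exists_le_le_sup_eq_of_supPrime {α : Type*} [SemilatticeSup α] [OrderBot α]
    {s : Finset α} (hs : ∀ a ∈ s, SupPrime a) {y z : α} (h : s.sup id ≤ y ⊔ z) :
    ∃ y' z' : α, y' ≤ y ∧ z' ≤ z ∧ s.sup id = y' ⊔ z' := by
  classical
  refine ⟨(s.filter (· ≤ y)).sup id, (s.filter (· ≤ z)).sup id,
    Finset.sup_le fun a ha => (Finset.mem_filter.1 ha).2,
    Finset.sup_le fun a ha => (Finset.mem_filter.1 ha).2, ?_⟩
  have hcover : s.filter (fun a => a ≤ y ∨ a ≤ z) = s :=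
    Finset.filter_true_of_mem fun a ha =>
      (hs a ha).le_sup.1 ((Finset.le_sup (f := id) ha).trans h)
  rw [← Finset.sup_union, ← Finset.filter_or, hcover]

namespace IsSemilatticeBasis

variable {S : Type*} [SemilatticeSup S] [OrderBot S] {B : Set S} (hB : IsSemilatticeBasis B)
include hB

noncomputable def support (x : S) : Finset S := (hB x).exists.choose

theorem support_subset (x : S) : ↑(hB.support x) ⊆ B := (hB x).exists.choose_spec.1

theorem sup_support (x : S) : (hB.support x).sup id = x := (hB x).exists.choose_spec.2.symm

theorem support_eq {x : S} {F : Finset S} (hFB : ↑F ⊆ B) (hx : x = F.sup id) :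
    hB.support x = F :=
  (hB x).unique (hB x).exists.choose_spec ⟨hFB, hx⟩

theorem support_sup [DecidableEq S] (x y : S) :
    hB.support (x ⊔ y) = hB.support x ∪ hB.support y := by
  refine hB.support_eq ?_ ?_
  · rw [Finset.coe_union]
    exact Set.union_subset (hB.support_subset x) (hB.support_subset y)
  · rw [Finset.sup_union, hB.sup_support, hB.sup_support]

theorem le_iff_support_subset {x y : S} : x ≤ y ↔ hB.support x ⊆ hB.support y := by
  classical
  refine ⟨fun h => ?_, fun h => ?_⟩
  · rw [← sup_eq_right.2 h, hB.support_sup]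
    exact Finset.subset_union_left
  · rw [← hB.sup_support x, ← hB.sup_support y]
    exact Finset.sup_mono h

theorem support_of_mem {b : S} (hb : b ∈ B) : hB.support b = {b} :=
  hB.support_eq (by simpa using hb) (by simp)

theorem bot_notMem : ⊥ ∉ B := fun h => by
  have hempty : hB.support ⊥ = ∅ := hB.support_eq (by simp) (by simp)
  simp [hB.support_of_mem h] at hempty

theorem supPrime {b : S} (hb : b ∈ B) : SupPrime b := by
  classical
  refine ⟨fun hmin => hB.bot_notMem (hmin.eq_bot ▸ hb), fun {y z} h => ?_⟩
  simpa [hB.le_iff_support_subset, hB.support_sup, hB.support_of_mem hb] using h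

end IsSemilatticeBasis

/-- A join-semilattice with bottom admitting a basis is distributive. -/
theorem distributive_of_basis {S : Type*} [SemilatticeSup S] [OrderBot S]
    (B : Set S) (hB : IsSemilatticeBasis B) :
    ∀ x y z : S, x ≤ y ⊔ z → ∃ y' z' : S, y' ≤ y ∧ z' ≤ z ∧ x = y' ⊔ z' := by
  intro x y z h
  rw [← hB.sup_support x] at h ⊢
  exact Finset.exists_le_le_sup_eq_of_supPrime
    (fun a ha => hB.supPrime (hB.support_subset x ha)) h
end
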